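/- Fix positive integers N, n, p, m_1, …, m_N, matrices A ∈ ℝ^{n×n}, B^j ∈ ℝ^{n×m_j}, C ∈ ℝ^{p×n}, D^j ∈ ℝ^{p×m_j}, symmetric Q^i ∈ ℝ^{p×p}, R^{ij} ∈ ℝ^{m_j×m_j}, and δ^i ∈ (0,1) for i, j ∈ {1,…,N}. Let K^{j*} ∈ ℝ^{m_j×n} with ‖A + Σ_j B^j K^{j*}‖₂ < 1, and for each j let (K^j(T))_{T∈ℕ} be a sequence of matrices in ℝ^{m_j×n} with K^j(T) → K^{j*} as T → ∞. For x₁ ∈ ℝ^n define J^i(x₁) := ½ Σ_{t=1}^∞ (δ^i)^{t−1} x₁^⊤ ((F^*)^{t−1})^⊤ [ (G^*)^⊤ Q^i G^* + Σ_j (K^{j*})^⊤ R^{ij} K^{j*} ] (F^*)^{t−1} x₁ with F^* = A + Σ_j B^j K^{j*}, G^* = C + Σ_j D^j K^{j*}; and for prediction horizons T¹, …, T^N define J̃^i(x₁; T¹,…,T^N) := ½ Σ_{t=1}^∞ (δ^i)^{t−1} x₁^⊤ (F̃^{t−1})^⊤ [ G̃^⊤ Q^i G̃ + Σ_j (K^j(T^j))^⊤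 R^{ij} K^j(T^j) ] F̃^{t−1} x₁ with F̃ = A + Σ_j B^j K^j(T^j), G̃ = C + Σ_j D^j K^j(T^j) (this series converges whenever ‖F̃‖₂ < 1, which holds for min_j T^j sufficiently large). Then for every i ∈ {1,…,N} and every x₁ ∈ ℝ^n: J̃^i(x₁; T¹,…,T^N) → J^i(x₁) as T_h := min_{j∈{1,…,N}} T^j → ∞. -/

import Mathlib

open Matrix BigOperators Filter Topology

/-- The spectral (operator 2-)norm of a real matrix. -/
noncomputable def sn {r c : ℕ} (A : Matrix (Fin r) (Fin c) ℝ) : ℝ :=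
  ‖LinearMap.toContinuousLinearMap (Matrix.toEuclideanLin A)‖

/-- Player `i`'s total discounted cost when each player `j` uses the constant linear
feedback gain `K j`:  `½ Σ_{t=1}^∞ δ^{t−1} x₁ᵀ (F^{t−1})ᵀ [GᵀQG + Σⱼ KʲᵀRⁱʲKʲ] F^{t−1} x₁`
with `F = A + Σⱼ BʲKʲ`, `G = C + Σⱼ DʲKʲ`. -/
noncomputable def totalCost {N n p : ℕ} {m : Fin N → ℕ}
    (A : Matrix (Fin n) (Fin n) ℝ)
    (B : (j : Fin N) → Matrix (Fin n) (Fin (m j)) ℝ)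
    (C : Matrix (Fin p) (Fin n) ℝ)
    (D : (j : Fin N) → Matrix (Fin p) (Fin (m j)) ℝ)
    (Qi : Matrix (Fin p) (Fin p) ℝ)
    (Ri : (j : Fin N) → Matrix (Fin (m j)) (Fin (m j)) ℝ)
    (δi : ℝ)
    (K : (j : Fin N) → Matrix (Fin (m j)) (Fin n) ℝ)
    (x₁ : Fin n → ℝ) : ℝ :=
  (1 / 2) * ∑' t : ℕ, δi ^ t *
    (x₁ ⬝ᵥ (((A + ∑ j, B j * K j) ^ t)ᵀ *
      ((C + ∑ j, D j * K j)ᵀ * Qi * (C + ∑ j, D j * K j)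
        + ∑ j, (K j)ᵀ * Ri j * K j) *
      (A + ∑ j, B j * K j) ^ t).mulVec x₁)

/-!
Both costs are discounted series of quadratic forms `x₁ᵀ (Fᵗ)ᵀ M Fᵗ x₁` whose closed-loop matrix
`F` and stage-cost matrix `M` depend continuously on the gains. Choosing `‖F*‖₂ < ρ < 1`, once the
horizons are large the closed-loop matrix also satisfies `‖F̃‖₂ < ρ`, so the `t`-th term is dominated
by a fixed multiple of `ρ^{2t}` and Tannery's theorem lets the limit pass inside the series.
-/

open scoped Matrix.Norms.L2Operator

theorem sn_eq_l2_opNorm {r c : ℕ} (A : Matrix (Fin r) (Fin c) ℝ) : sn A = ‖A‖ := rfl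

namespace Matrix

variable {n : Type*} [Fintype n] [DecidableEq n]

theorem abs_dotProduct_mulVec_le_l2_opNorm (P : Matrix n n ℝ) (x : n → ℝ) :
    |x ⬝ᵥ (P *ᵥ x)| ≤ ‖P‖ * ‖WithLp.toLp 2 x‖ ^ 2 := by
  have hinner : x ⬝ᵥ (P *ᵥ x) = inner ℝ (WithLp.toLp 2 (P *ᵥ x)) (WithLp.toLp 2 x) := by
    rw [EuclideanSpace.inner_eq_star_dotProduct]; rfl
  calc |x ⬝ᵥ (P *ᵥ x)| ≤ ‖WithLp.toLp 2 (P *ᵥ x)‖ * ‖WithLp.toLp 2 x‖ :=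
        hinner ▸ abs_real_inner_le_norm _ _
    _ ≤ ‖P‖ * ‖WithLp.toLp 2 x‖ * ‖WithLp.toLp 2 x‖ := by
        gcongr; exact l2_opNorm_mulVec P (WithLp.toLp 2 x)
    _ = ‖P‖ * ‖WithLp.toLp 2 x‖ ^ 2 := by ring

theorem l2_opNorm_transpose_pow_mul_mul_pow_le (F M : Matrix n n ℝ) (t : ℕ) :
    ‖(F ^ t)ᵀ * M * F ^ t‖ ≤ ‖M‖ * (‖F‖ ^ 2) ^ t := by
  rcases Nat.eq_zero_or_pos t with rfl | ht
  · simp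
  have hpow : ‖F ^ t‖ ≤ ‖F‖ ^ t := norm_pow_le' F ht
  calc ‖(F ^ t)ᵀ * M * F ^ t‖ ≤ ‖F ^ t‖ * ‖M‖ * ‖F ^ t‖ := by
        grw [l2_opNorm_mul, l2_opNorm_mul, ← conjTranspose_eq_transpose_of_trivial,
          l2_opNorm_conjTranspose]
    _ ≤ ‖F‖ ^ t * ‖M‖ * ‖F‖ ^ t := by gcongr
    _ = ‖M‖ * (‖F‖ ^ 2) ^ t := by ring

theorem tendsto_tsum_discounted_quadratic_form {ι : Type*} {l : Filter ι}
    {F M : ι → Matrix n n ℝ} {F₀ M₀ : Matrix n n ℝ}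
    (hF : Tendsto F l (𝓝 F₀)) (hM : Tendsto M l (𝓝 M₀)) (hF₀ : ‖F₀‖ < 1)
    {δ : ℝ} (hδ : |δ| ≤ 1) (x : n → ℝ) :
    Tendsto (fun k => ∑' t : ℕ, δ ^ t * (x ⬝ᵥ (((F k ^ t)ᵀ * M k * F k ^ t) *ᵥ x))) l
      (𝓝 (∑' t : ℕ, δ ^ t * (x ⬝ᵥ (((F₀ ^ t)ᵀ * M₀ * F₀ ^ t) *ᵥ x)))) := by
  obtain ⟨ρ, hF₀ρ, hρ1⟩ := exists_between hF₀
  have hρ0 : 0 ≤ ρ := (norm_nonneg _).trans hF₀ρ.le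
  have hsummable : Summable fun t : ℕ => (‖M₀‖ + 1) * ‖WithLp.toLp 2 x‖ ^ 2 * (ρ ^ 2) ^ t :=
    (summable_geometric_of_lt_one (by positivity) (by nlinarith)).mul_left _
  have hterm : ∀ t : ℕ, Tendsto (fun k => δ ^ t * (x ⬝ᵥ (((F k ^ t)ᵀ * M k * F k ^ t) *ᵥ x))) l
      (𝓝 (δ ^ t * (x ⬝ᵥ (((F₀ ^ t)ᵀ * M₀ * F₀ ^ t) *ᵥ x)))) := by
    intro t
    have hcont : Continuous fun P : Matrix n n ℝ × Matrix n n ℝ =>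
        δ ^ t * (x ⬝ᵥ (((P.1 ^ t)ᵀ * P.2 * P.1 ^ t) *ᵥ x)) := by fun_prop
    exact ((hcont.tendsto (F₀, M₀)).comp (hF.prodMk_nhds hM) :)
  refine tendsto_tsum_of_dominated_convergence hsummable hterm ?_
  filter_upwards [(continuous_norm.tendsto F₀).comp hF |>.eventually_lt_const hF₀ρ,
    (continuous_norm.tendsto M₀).comp hM |>.eventually_lt_const (lt_add_one _)]
    with k hFk hMk t
  calc ‖δ ^ t * (x ⬝ᵥ (((F k ^ t)ᵀ * M k * F k ^ t) *ᵥ x))‖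
      ≤ ‖(F k ^ t)ᵀ * M k * F k ^ t‖ * ‖WithLp.toLp 2 x‖ ^ 2 := by
        rw [norm_mul, norm_pow, Real.norm_eq_abs, Real.norm_eq_abs]
        exact (mul_le_of_le_one_left (abs_nonneg _) (pow_le_one₀ (abs_nonneg _) hδ)).trans
          (abs_dotProduct_mulVec_le_l2_opNorm _ x)
    _ ≤ ‖M k‖ * (‖F k‖ ^ 2) ^ t * ‖WithLp.toLp 2 x‖ ^ 2 := by
        gcongr; exact l2_opNorm_transpose_pow_mul_mul_pow_le _ _ t
    _ ≤ (‖M₀‖ + 1) * (ρ ^ 2) ^ t * ‖WithLp.toLp 2 x‖ ^ 2 := by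
        have hFk_le : ‖F k‖ ≤ ρ := hFk.le
        gcongr
        exact hMk.le
    _ = (‖M₀‖ + 1) * ‖WithLp.toLp 2 x‖ ^ 2 * (ρ ^ 2) ^ t := by ring

end Matrix

theorem tendsto_pi_apply_atTop {ι α : Type*} [Preorder α] {X : ι → Type*}
    [∀ j, TopologicalSpace (X j)] {K : (j : ι) → α → X j} {K₀ : (j : ι) → X j}
    (hK : ∀ j, Tendsto (K j) atTop (𝓝 (K₀ j))) :
    Tendsto (fun (T : ι → α) j => K j (T j)) atTop (𝓝 K₀) :=
  tendsto_pi_nhds.2 fun j =>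
    (hK j).comp (Monotone.tendsto_atTop_atTop (fun _ _ h => h j) fun b => ⟨fun _ => b, le_rfl⟩)

theorem stmt16_general {N n p : ℕ} {m : Fin N → ℕ}
    (A : Matrix (Fin n) (Fin n) ℝ)
    (B : (j : Fin N) → Matrix (Fin n) (Fin (m j)) ℝ)
    (C : Matrix (Fin p) (Fin n) ℝ)
    (D : (j : Fin N) → Matrix (Fin p) (Fin (m j)) ℝ)
    (Q : Fin N → Matrix (Fin p) (Fin p) ℝ)
    (R : (i j : Fin N) → Matrix (Fin (m j)) (Fin (m j)) ℝ)
    (δ : Fin N → ℝ)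
    (hδ : ∀ i, 0 < δ i ∧ δ i < 1)
    (Kstar : (j : Fin N) → Matrix (Fin (m j)) (Fin n) ℝ)
    (hstab : sn (A + ∑ j, B j * Kstar j) < 1)
    (K : (j : Fin N) → ℕ → Matrix (Fin (m j)) (Fin n) ℝ)
    (hconv : ∀ j, Tendsto (fun T => K j T) atTop (𝓝 (Kstar j))) :
    ∀ (i : Fin N) (x₁ : Fin n → ℝ),
      Tendsto
        (fun Tv : Fin N → ℕ =>
          totalCost A B C D (Q i) (R i) (δ i) (fun j => K j (Tv j)) x₁)
        atTop
        (𝓝 (totalCost A B C D (Q i) (R i) (δ i) Kstar x₁)) := by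
  intro i x₁
  have hK := tendsto_pi_apply_atTop hconv
  have hF : Continuous fun Ks : (j : Fin N) → Matrix (Fin (m j)) (Fin n) ℝ =>
      A + ∑ j, B j * Ks j := by fun_prop
  have hM : Continuous fun Ks : (j : Fin N) → Matrix (Fin (m j)) (Fin n) ℝ =>
      (C + ∑ j, D j * Ks j)ᵀ * Q i * (C + ∑ j, D j * Ks j) + ∑ j, (Ks j)ᵀ * R i j * Ks j := by
    fun_prop
  have hδ_abs : |δ i| ≤ 1 := abs_le.2 ⟨by linarith [(hδ i).1], (hδ i).2.le⟩
  exact (Matrix.tendsto_tsum_discounted_quadratic_form ((hF.tendsto _).comp hK)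
    ((hM.tendsto _).comp hK) ((sn_eq_l2_opNorm _).symm.trans_lt hstab) hδ_abs x₁).const_mul _

/-- Theorem 1, part 1: if each finite-horizon strategy gain `Kʲ(T)`
converges to the limiting FNE gain `K^{j*}` as `T → ∞`, and `‖A + Σⱼ BʲK^{j*}‖₂ < 1`,
then the total cost under the heterogeneous finite-horizon strategies converges to the
cost under the limiting FNE as `T_h = minⱼ Tʲ → ∞` (i.e. along `atTop` on the tuple
`(T¹,…,Tᴺ)` of prediction horizons). -/
theorem stmt16 {N n p : ℕ} {m : Fin N → ℕ}
    (hN : 0 < N) (hn : 0 < n) (hp : 0 < p) (hm : ∀ j, 0 < m j)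
    (A : Matrix (Fin n) (Fin n) ℝ)
    (B : (j : Fin N) → Matrix (Fin n) (Fin (m j)) ℝ)
    (C : Matrix (Fin p) (Fin n) ℝ)
    (D : (j : Fin N) → Matrix (Fin p) (Fin (m j)) ℝ)
    (Q : Fin N → Matrix (Fin p) (Fin p) ℝ)
    (R : (i j : Fin N) → Matrix (Fin (m j)) (Fin (m j)) ℝ)
    (δ : Fin N → ℝ)
    (hQ : ∀ i, (Q i).IsSymm)
    (hR : ∀ i j, (R i j).IsSymm)
    (hδ : ∀ i, 0 < δ i ∧ δ i < 1)
    (Kstar : (j : Fin N) → Matrix (Fin (m j)) (Fin n) ℝ)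
    (hstab : sn (A + ∑ j, B j * Kstar j) < 1)
    (K : (j : Fin N) → ℕ → Matrix (Fin (m j)) (Fin n) ℝ)
    (hconv : ∀ j, Tendsto (fun T => K j T) atTop (𝓝 (Kstar j))) :
    ∀ (i : Fin N) (x₁ : Fin n → ℝ),
      Tendsto
        (fun Tv : Fin N → ℕ =>
          totalCost A B C D (Q i) (R i) (δ i) (fun j => K j (Tv j)) x₁)
        atTop
        (𝓝 (totalCost A B C D (Q i) (R i) (δ i) Kstar x₁)) :=
  stmt16_general A B C D Q R δ hδ Kstar hstab K hconv
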